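/- Let Φ be a CPTP map on M_d admitting a Markov–Dobrushin minorization: there is a positive semidefinite matrix B with B ≤ Φ(P) for every rank-one projection P. Then κ_tr(Φ) ≤ 1 − tr(B). -/

import Mathlib

open Matrix
open scoped ComplexOrder

namespace TD

variable {d : ℕ}

noncomputable def trNorm (A : Matrix (Fin d) (Fin d) ℂ) : ℝ :=
  (((Matrix.posSemidef_conjTranspose_mul_self A).1.eigenvectorUnitary.1 *
    Matrix.diagonal (fun i => ((Real.sqrt ((Matrix.posSemidef_conjTranspose_mul_self A).1.eigenvalues i) : ℝ) : ℂ)) *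
    (star (Matrix.posSemidef_conjTranspose_mul_self A).1.eigenvectorUnitary : Matrix (Fin d) (Fin d) ℂ)).trace).re

noncomputable def hsNorm (A : Matrix (Fin d) (Fin d) ℂ) : ℝ :=
  Real.sqrt ((Aᴴ * A).trace.re)

def Density (ρ : Matrix (Fin d) (Fin d) ℂ) : Prop :=
  ρ.PosSemidef ∧ ρ.trace = 1

def PosMap (T : Matrix (Fin d) (Fin d) ℂ →ₗ[ℂ] Matrix (Fin d) (Fin d) ℂ) : Prop :=
  ∀ A, A.PosSemidef → (T A).PosSemidef

def TrPres (T : Matrix (Fin d) (Fin d) ℂ →ₗ[ℂ] Matrix (Fin d) (Fin d) ℂ) : Prop :=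
  ∀ A, (T A).trace = A.trace

noncomputable def kappaTr (T : Matrix (Fin d) (Fin d) ℂ →ₗ[ℂ] Matrix (Fin d) (Fin d) ℂ) : ℝ :=
  ⨆ X : {X : Matrix (Fin d) (Fin d) ℂ // X.IsHermitian ∧ X.trace = 0 ∧ X ≠ 0},
    trNorm (T X.1) / trNorm X.1

noncomputable def opNorm1 (L : Matrix (Fin d) (Fin d) ℂ →ₗ[ℂ] Matrix (Fin d) (Fin d) ℂ) : ℝ :=
  ⨆ X : {X : Matrix (Fin d) (Fin d) ℂ // X ≠ 0}, trNorm (L X.1) / trNorm X.1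

noncomputable def s0 (T : Matrix (Fin d) (Fin d) ℂ →ₗ[ℂ] Matrix (Fin d) (Fin d) ℂ) : ℝ :=
  ⨆ X : {X : Matrix (Fin d) (Fin d) ℂ // X.trace = 0 ∧ X ≠ 0},
    hsNorm (T X.1) / hsNorm X.1

noncomputable def choi (T : Matrix (Fin d) (Fin d) ℂ →ₗ[ℂ] Matrix (Fin d) (Fin d) ℂ) :
    Matrix (Fin d × Fin d) (Fin d × Fin d) ℂ :=
  Matrix.of fun p q => T (Matrix.single p.1 q.1 1) p.2 q.2

def CP (T : Matrix (Fin d) (Fin d) ℂ →ₗ[ℂ] Matrix (Fin d) (Fin d) ℂ) : Prop :=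
  (choi T).PosSemidef

noncomputable def replaceChan (τ : Matrix (Fin d) (Fin d) ℂ) :
    Matrix (Fin d) (Fin d) ℂ →ₗ[ℂ] Matrix (Fin d) (Fin d) ℂ where
  toFun X := X.trace • τ
  map_add' X Y := by simp [Matrix.trace_add, add_smul]
  map_smul' c X := by simp [Matrix.trace_smul, smul_smul]

noncomputable def prodComp {n : ℕ} (T : Fin n → (Matrix (Fin d) (Fin d) ℂ →ₗ[ℂ] Matrix (Fin d) (Fin d) ℂ)) :
    Matrix (Fin d) (Fin d) ℂ →ₗ[ℂ] Matrix (Fin d) (Fin d) ℂ :=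
  (List.ofFn T).foldl (fun acc f => f ∘ₗ acc) LinearMap.id

noncomputable def lpow (T : Matrix (Fin d) (Fin d) ℂ →ₗ[ℂ] Matrix (Fin d) (Fin d) ℂ) :
    ℕ → (Matrix (Fin d) (Fin d) ℂ →ₗ[ℂ] Matrix (Fin d) (Fin d) ℂ)
  | 0 => LinearMap.id
  | n + 1 => T ∘ₗ lpow T n

noncomputable def conjPair (K0 K1 : Matrix (Fin 2) (Fin 2) ℂ) :
    Matrix (Fin 2) (Fin 2) ℂ →ₗ[ℂ] Matrix (Fin 2) (Fin 2) ℂ where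
  toFun X := K0 * X * K0ᴴ + K1 * X * K1ᴴ
  map_add' X Y := by
    simp only [Matrix.mul_add, Matrix.add_mul]
    abel
  map_smul' c X := by
    simp [Matrix.mul_smul, Matrix.smul_mul, smul_add]

end TD

/-!
Split a traceless Hermitian `X = ∑ μᵢ Pᵢ` along its eigenprojections into `X₊ - X₋`, where
`X₊ = ∑ μᵢ⁺ Pᵢ` and `X₋ = ∑ μᵢ⁻ Pᵢ` both have trace `t = ‖X‖₁ / 2`. The minorization makes
`Φ X₊ - t B` and `Φ X₋ - t B` positive semidefinite, each of trace `t (1 - tr B)`, and the trace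
norm of a difference of two positive semidefinite matrices is at most the sum of their traces.
-/

lemma Complex.abs_re_sub_le {a b : ℂ} (ha : 0 ≤ a) (hb : 0 ≤ b) : |(a - b).re| ≤ a.re + b.re := by
  rw [Complex.sub_re, abs_le]
  constructor <;> linarith [(Complex.nonneg_iff.mp ha).1, (Complex.nonneg_iff.mp hb).1]

lemma Matrix.IsHermitian.trace_cfc {n : Type*} [Fintype n] [DecidableEq n] {A : Matrix n n ℂ}
    (hA : A.IsHermitian) (f : ℝ → ℝ) : (cfc f A).trace = ∑ i, (f (hA.eigenvalues i) : ℂ) := by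
  rw [hA.cfc_eq, IsHermitian.cfc, Unitary.conjStarAlgAut_apply, trace_mul_cycle,
    Unitary.coe_star_mul_self, one_mul, trace_diagonal]
  rfl

lemma Matrix.PosSemidef.sum_abs_eigenvalues_sub_le {n : Type*} [Fintype n] [DecidableEq n]
    {C D : Matrix n n ℂ} (hC : C.PosSemidef) (hD : D.PosSemidef) :
    ∑ i, |(hC.1.sub hD.1).eigenvalues i| ≤ C.trace.re + D.trace.re := by
  set U := (hC.1.sub hD.1).eigenvectorUnitary
  set V : Matrix n n ℂ := (U : Matrix n n ℂ)
  have hdiag :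
      Vᴴ * C * V - Vᴴ * D * V = diagonal (RCLike.ofReal ∘ (hC.1.sub hD.1).eigenvalues) := by
    rw [← sub_mul, ← mul_sub, ← star_eq_conjTranspose,
      ← (hC.1.sub hD.1).conjStarAlgAut_star_eigenvectorUnitary, Unitary.conjStarAlgAut_star_apply]
  have htrace : ∀ M : Matrix n n ℂ, (Vᴴ * M * V).trace = M.trace := fun M => by
    rw [trace_mul_cycle, ← star_eq_conjTranspose, mem_unitaryGroup_iff.mp U.2, one_mul]
  calc ∑ i, |(hC.1.sub hD.1).eigenvalues i|
      = ∑ i, |((Vᴴ * C * V) i i - (Vᴴ * D * V) i i).re| := by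
        refine Finset.sum_congr rfl fun i _ => ?_
        rw [← sub_apply, hdiag]
        simp
    _ ≤ ∑ i, (((Vᴴ * C * V) i i).re + ((Vᴴ * D * V) i i).re) :=
        Finset.sum_le_sum fun _ _ => Complex.abs_re_sub_le
          (hC.conjTranspose_mul_mul_same V).diag_nonneg
          (hD.conjTranspose_mul_mul_same V).diag_nonneg
    _ = C.trace.re + D.trace.re := by
        rw [Finset.sum_add_distrib, ← htrace C, ← htrace D]
        simp [trace, Complex.re_sum]

namespace Matrix.IsHermitian

variable {n : Type*} [Fintype n] [DecidableEq n] {A : Matrix n n ℂ} (hA : A.IsHermitian)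

noncomputable def eigenprojection (i : n) : Matrix n n ℂ :=
  Unitary.conjStarAlgAut ℂ _ hA.eigenvectorUnitary (single i i 1)

lemma isHermitian_eigenprojection (i : n) : (hA.eigenprojection i).IsHermitian := by
  rw [IsHermitian, ← star_eq_conjTranspose, eigenprojection, ← map_star, star_eq_conjTranspose,
    conjTranspose_single, star_one]

lemma eigenprojection_mul_self (i : n) :
    hA.eigenprojection i * hA.eigenprojection i = hA.eigenprojection i := by
  rw [eigenprojection, ← map_mul, single_mul_single_same, one_mul]

lemma trace_eigenprojection (i : n) : (hA.eigenprojection i).trace = 1 := by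
  rw [eigenprojection, Unitary.conjStarAlgAut_apply, trace_mul_cycle, Unitary.coe_star_mul_self,
    one_mul, trace_single_eq_same]

lemma sum_smul_eigenprojection (c : n → ℂ) :
    ∑ i, c i • hA.eigenprojection i =
      Unitary.conjStarAlgAut ℂ _ hA.eigenvectorUnitary (diagonal c) := by
  simp only [eigenprojection, ← map_smul, ← map_sum, smul_single, smul_eq_mul, mul_one,
    sum_single_eq_diagonal]

lemma eq_sum_eigenvalues_smul_eigenprojection :
    A = ∑ i, (hA.eigenvalues i : ℂ) • hA.eigenprojection i := by
  rw [sum_smul_eigenprojection]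
  exact hA.spectral_theorem

end Matrix.IsHermitian

namespace TD

variable {d : ℕ} {Φ : Matrix (Fin d) (Fin d) ℂ →ₗ[ℂ] Matrix (Fin d) (Fin d) ℂ}
  {B : Matrix (Fin d) (Fin d) ℂ}

lemma trNorm_eq_re_trace_cfc_sqrt (A : Matrix (Fin d) (Fin d) ℂ) :
    trNorm A = (cfc Real.sqrt (Aᴴ * A)).trace.re := by
  rw [(posSemidef_conjTranspose_mul_self A).1.cfc_eq, IsHermitian.cfc, Unitary.conjStarAlgAut_apply]
  rfl

lemma trNorm_of_isHermitian {A : Matrix (Fin d) (Fin d) ℂ} (hA : A.IsHermitian) :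
    trNorm A = ∑ i, |hA.eigenvalues i| := by
  have hsq : Aᴴ * A = cfc (fun x : ℝ => x ^ 2) A := by
    rw [cfc_pow_id A 2 hA.isSelfAdjoint, hA.eq, sq]
  rw [trNorm_eq_re_trace_cfc_sqrt, hsq,
    ← cfc_comp Real.sqrt (fun x : ℝ => x ^ 2) A hA.isSelfAdjoint, hA.trace_cfc, Complex.re_sum]
  simp [Real.sqrt_sq_eq_abs]

lemma trNorm_pos {A : Matrix (Fin d) (Fin d) ℂ} (hA : A.IsHermitian) (h : A ≠ 0) :
    0 < trNorm A := by
  rw [trNorm_of_isHermitian hA]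
  obtain ⟨i, hi⟩ := Function.ne_iff.mp (hA.eigenvalues_eq_zero_iff.not.mpr h)
  exact Finset.sum_pos' (fun _ _ => abs_nonneg _) ⟨i, Finset.mem_univ i, abs_pos.mpr hi⟩

lemma trNorm_sub_le_of_posSemidef {C D : Matrix (Fin d) (Fin d) ℂ} (hC : C.PosSemidef)
    (hD : D.PosSemidef) : trNorm (C - D) ≤ C.trace.re + D.trace.re := by
  rw [trNorm_of_isHermitian (hC.1.sub hD.1)]
  exact hC.sum_abs_eigenvalues_sub_le hD

lemma re_trace_map_sum_smul_eigenprojection_sub (htr : TrPres Φ) {X : Matrix (Fin d) (Fin d) ℂ}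
    (hX : X.IsHermitian) (c : Fin d → ℝ) :
    (Φ (∑ i, (c i : ℂ) • hX.eigenprojection i) - ((∑ i, c i : ℝ) : ℂ) • B).trace.re =
      (∑ i, c i) * (1 - B.trace.re) := by
  rw [trace_sub, htr]
  simp [trace_sum, hX.trace_eigenprojection, Complex.re_sum, mul_sub]

section Minorization

variable (hlow : ∀ P : Matrix (Fin d) (Fin d) ℂ, P.IsHermitian → P * P = P → P.trace = 1 →
  (Φ P - B).PosSemidef)
include hlow

lemma re_trace_le_one (htr : TrPres Φ) : B.trace.re ≤ 1 := by
  rcases isEmpty_or_nonempty (Fin d) with _ | ⟨⟨i⟩⟩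
  · simp [trace]
  · have hP := hlow (single i i 1) (by simp [IsHermitian, conjTranspose_single])
      (by rw [single_mul_single_same, one_mul]) (trace_single_eq_same i 1)
    have := Complex.nonneg_iff.mp hP.trace_nonneg
    rw [trace_sub, htr, trace_single_eq_same i 1] at this
    simpa using this.1

lemma posSemidef_map_sum_smul_eigenprojection_sub {X : Matrix (Fin d) (Fin d) ℂ}
    (hX : X.IsHermitian) {c : Fin d → ℝ} (hc : 0 ≤ c) :
    (Φ (∑ i, (c i : ℂ) • hX.eigenprojection i) - ((∑ i, c i : ℝ) : ℂ) • B).PosSemidef := by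
  rw [map_sum, Complex.ofReal_sum, Finset.sum_smul, ← Finset.sum_sub_distrib]
  refine Finset.sum_induction _ PosSemidef (fun _ _ => PosSemidef.add) PosSemidef.zero fun i _ => ?_
  rw [map_smul, ← smul_sub]
  exact (hlow _ (hX.isHermitian_eigenprojection i) (hX.eigenprojection_mul_self i)
    (hX.trace_eigenprojection i)).smul (by exact_mod_cast hc i)

lemma trNorm_map_le (htr : TrPres Φ) {X : Matrix (Fin d) (Fin d) ℂ} (hX : X.IsHermitian)
    (hX0 : X.trace = 0) : trNorm (Φ X) ≤ (1 - B.trace.re) * trNorm X := by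
  set μ := hX.eigenvalues
  set μpos : Fin d → ℝ := fun i => max (μ i) 0
  set μneg : Fin d → ℝ := fun i => max (-μ i) 0
  have hpm : ∀ i, μpos i - μneg i = μ i := fun i => max_zero_sub_max_neg_zero_eq_self (μ i)
  have hsum : ∑ i, μneg i = ∑ i, μpos i := by
    have h : ∑ i, μ i = 0 := by
      simpa [Complex.re_sum] using congrArg Complex.re (hX.trace_eq_sum_eigenvalues.symm.trans hX0)
    have hdiff := Finset.sum_sub_distrib μpos μneg (s := Finset.univ)
    simp_rw [hpm, h] at hdiff
    linarith
  have hΦX : Φ X =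
      (Φ (∑ i, (μpos i : ℂ) • hX.eigenprojection i) - ((∑ i, μpos i : ℝ) : ℂ) • B) -
      (Φ (∑ i, (μneg i : ℂ) • hX.eigenprojection i) - ((∑ i, μneg i : ℝ) : ℂ) • B) := by
    conv_lhs => rw [hX.eq_sum_eigenvalues_smul_eigenprojection]
    rw [hsum, sub_sub_sub_cancel_right, ← map_sub, ← Finset.sum_sub_distrib]
    simp_rw [← sub_smul, ← Complex.ofReal_sub, hpm]
    rfl
  calc trNorm (Φ X) ≤ _ + _ := hΦX ▸ trNorm_sub_le_of_posSemidef
        (posSemidef_map_sum_smul_eigenprojection_sub hlow hX (c := μpos) fun _ => le_max_right _ _)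
        (posSemidef_map_sum_smul_eigenprojection_sub hlow hX (c := μneg) fun _ => le_max_right _ _)
    _ = (1 - B.trace.re) * (∑ i, μpos i + ∑ i, μneg i) := by
      rw [re_trace_map_sum_smul_eigenprojection_sub htr,
        re_trace_map_sum_smul_eigenprojection_sub htr]
      ring
    _ = (1 - B.trace.re) * trNorm X := by
      rw [trNorm_of_isHermitian hX, ← Finset.sum_add_distrib]
      simp [μpos, μneg, μ, max_zero_add_max_neg_zero_eq_abs_self]

end Minorization
end TD

theorem stmt9_general {d : ℕ}
    (Φ : Matrix (Fin d) (Fin d) ℂ →ₗ[ℂ] Matrix (Fin d) (Fin d) ℂ)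
    (htr : TD.TrPres Φ)
    (B : Matrix (Fin d) (Fin d) ℂ)
    (hlow : ∀ P : Matrix (Fin d) (Fin d) ℂ, P.IsHermitian → P * P = P → P.trace = 1 →
      (Φ P - B).PosSemidef) :
    TD.kappaTr Φ ≤ 1 - B.trace.re := by
  refine Real.iSup_le (fun ⟨X, hX, hX0, hXne⟩ => ?_) (sub_nonneg.mpr (TD.re_trace_le_one hlow htr))
  rw [div_le_iff₀ (TD.trNorm_pos hX hXne)]
  exact TD.trNorm_map_le hlow htr hX hX0

theorem stmt9 {d : ℕ} (hd : 2 ≤ d)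
    (Φ : Matrix (Fin d) (Fin d) ℂ →ₗ[ℂ] Matrix (Fin d) (Fin d) ℂ)
    (hcp : TD.CP Φ) (htr : TD.TrPres Φ)
    (B : Matrix (Fin d) (Fin d) ℂ) (hB : B.PosSemidef)
    (hlow : ∀ P : Matrix (Fin d) (Fin d) ℂ, P.IsHermitian → P * P = P → P.trace = 1 →
      (Φ P - B).PosSemidef) :
    TD.kappaTr Φ ≤ 1 - B.trace.re :=
  stmt9_general Φ htr B hlow
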